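/- Let N = 2^n and let B ⊆ {0,...,N-1} be reciprocal with complement B^c of size N̄ = 2^{n̄}, and suppose G_N(B^c, B^c) = G_{N̄} (B is hierarchical). Then for any information set A ⊆ B^c and any two input vectors u, v ∈ GF(2)^N with u_i = v_i for all i ∈ B^c, the punctured codewords (coordinates of u·G_N and v·G_N indexed by B^c) are equal and are determined by the length-N̄ polar encoding of (u_i : i ∈ B^c) with generator G_{N̄}. -/

import Mathlib

/-- The 2×2 Arikan kernel over GF(2). -/
def G2 : Matrix (Fin 2) (Fin 2) (ZMod 2) := !![1, 0; 1, 1]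

/-- Entry `(i,j)` of the `n`-fold Kronecker power `G_2^{⊗n}` of the Arikan kernel,
under the standard index identification `i = Σ_k b_k(i) 2^k`:
`(G_2^{⊗n})_{i,j} = ∏_k (G_2)_{b_k(i), b_k(j)}`. -/
def Gnat (n : ℕ) (i j : ℕ) : ZMod 2 :=
  ∏ k ∈ Finset.range n,
    G2 (if Nat.testBit i k then 1 else 0) (if Nat.testBit j k then 1 else 0)

/-- The matrix `G_N = G_2^{⊗n}` (with `N = 2^n`) over GF(2). -/
def GN (n : ℕ) : Matrix (Fin (2 ^ n)) (Fin (2 ^ n)) (ZMod 2) :=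
  Matrix.of fun i j => Gnat n i.val j.val

/-- `Dom j i` : the binary expansion of `j` is bitwise dominated by that of `i`. -/
def Dom (j i : ℕ) : Prop := ∀ k, Nat.testBit j k = true → Nat.testBit i k = true

/-- The bit-permutation map on `{0,...,2^n-1}` induced by a permutation `σ` of
the `n` bit positions: bit `k` of the output is bit `σ(k)` of the input. -/
def bperm (n : ℕ) (σ : Equiv.Perm (Fin n)) (i : ℕ) : ℕ :=
  ∑ k : Fin n, if Nat.testBit i (σ k) then 2 ^ (k : ℕ) else 0

/-!
Since `G_2` is lower triangular, `(G_N)_{i,j} = 0` unless `j` is bitwise dominated by `i`.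
For a column `j ∉ B` of a downward-closed `B`, every row `i ∈ B` therefore contributes nothing
to `(u G_N)_j`, so this coordinate depends only on `(u_i : i ∈ Bᶜ)`; reindexing `Bᶜ` by `e` and
using `G_N(Bᶜ, Bᶜ) = G_N̄` turns it into the `k`-th coordinate of `(u ∘ e) G_N̄`.
-/

open Matrix

lemma Gnat_eq_zero_of_not_dom {n i j : ℕ} (hj : j < 2 ^ n) (h : ¬ Dom j i) :
    Gnat n i j = 0 := by
  obtain ⟨k, hjk, hik⟩ : ∃ k, j.testBit k = true ∧ ¬ i.testBit k = true := by
    simpa [Dom] using h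
  have hkn : k < n :=
    (Nat.pow_lt_pow_iff_right (by norm_num : 1 < 2)).mp
      (lt_of_le_of_lt (Nat.ge_two_pow_of_testBit hjk) hj)
  refine Finset.prod_eq_zero (Finset.mem_range.mpr hkn) ?_
  simp [hjk, hik, G2]

lemma vecMul_GN_apply_eq_sum_compl {n : ℕ} {B : Finset (Fin (2 ^ n))}
    (hdc : ∀ i ∈ B, ∀ j : Fin (2 ^ n), Dom j.val i.val → j ∈ B)
    (u : Fin (2 ^ n) → ZMod 2) {j : Fin (2 ^ n)} (hj : j ∉ B) :
    (u ᵥ* GN n) j = ∑ i ∈ Bᶜ, u i * GN n i j := by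
  have hrow : ∀ i ∈ B, GN n i j = 0 := fun i hi =>
    Gnat_eq_zero_of_not_dom j.isLt fun hdom => hj (hdc i hi j hdom)
  rw [vecMul, dotProduct, ← Finset.sum_subset (Finset.subset_univ Bᶜ)]
  intro i _ hi
  rw [hrow i (by simpa using hi), mul_zero]

theorem stmt_16_general (n nb : ℕ) (B : Finset (Fin (2 ^ n)))
    (hdc : ∀ i ∈ B, ∀ j : Fin (2 ^ n), Dom j.val i.val → j ∈ B)
    (e : Fin (2 ^ nb) → Fin (2 ^ n)) (he : StrictMono e)
    (hrange : ∀ x : Fin (2 ^ n), x ∈ Bᶜ ↔ x ∈ Set.range e)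
    (hsub : (GN n).submatrix e e = GN nb) :
    ∀ A : Set (Fin (2 ^ n)), (∀ a ∈ A, a ∈ Bᶜ) →
      ∀ u v : Fin (2 ^ n) → ZMod 2, (∀ i ∈ Bᶜ, u i = v i) →
        (∀ k, Matrix.vecMul u (GN n) (e k) = Matrix.vecMul v (GN n) (e k)) ∧
        (∀ k, Matrix.vecMul u (GN n) (e k) = Matrix.vecMul (u ∘ e) (GN nb) k) := by
  intro _ _ u v huv
  have he_mem : ∀ k, e k ∈ Bᶜ := fun k => (hrange (e k)).mpr ⟨k, rfl⟩
  have hBc : Bᶜ = Finset.univ.image e := by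
    ext x
    simp [hrange x]
  have hpuncture : ∀ (w : Fin (2 ^ n) → ZMod 2) k,
      (w ᵥ* GN n) (e k) = ((w ∘ e) ᵥ* GN nb) k := by
    intro w k
    rw [vecMul_GN_apply_eq_sum_compl hdc w (Finset.mem_compl.mp (he_mem k)), hBc,
      Finset.sum_image he.injective.injOn, ← hsub]
    rfl
  refine ⟨fun k => ?_, hpuncture u⟩
  have hcomp : u ∘ e = v ∘ e := funext fun m => huv (e m) (he_mem m)
  rw [hpuncture u, hpuncture v, hcomp]

/-- for a hierarchical reciprocal `B` (with `|B^c| = 2^n̄` and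
`G_N(B^c,B^c) = G_N̄`, where the strictly monotone `e` enumerates `B^c` in
increasing order), for any information set `A ⊆ B^c` and any two input vectors
agreeing on `B^c`, the punctured codewords (coordinates of `u·G_N` indexed by
`B^c`) coincide and are given by the length-`N̄` polar encoding of
`(u_i : i ∈ B^c)` with generator `G_N̄`. -/
theorem stmt_16 (n nb : ℕ) (hn : nb < n) (B : Finset (Fin (2 ^ n)))
    (h0 : (⟨0, Nat.two_pow_pos n⟩ : Fin (2 ^ n)) ∈ B)
    (hdc : ∀ i ∈ B, ∀ j : Fin (2 ^ n), Dom j.val i.val → j ∈ B)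
    (hcard : Bᶜ.card = 2 ^ nb)
    (e : Fin (2 ^ nb) → Fin (2 ^ n)) (he : StrictMono e)
    (hrange : ∀ x : Fin (2 ^ n), x ∈ Bᶜ ↔ x ∈ Set.range e)
    (hsub : (GN n).submatrix e e = GN nb) :
    ∀ A : Set (Fin (2 ^ n)), (∀ a ∈ A, a ∈ Bᶜ) →
      ∀ u v : Fin (2 ^ n) → ZMod 2, (∀ i ∈ Bᶜ, u i = v i) →
        (∀ k, Matrix.vecMul u (GN n) (e k) = Matrix.vecMul v (GN n) (e k)) ∧
        (∀ k, Matrix.vecMul u (GN n) (e k) = Matrix.vecMul (u ∘ e) (GN nb) k) :=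
  stmt_16_general n nb B hdc e he hrange hsub
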